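/- arXiv:2202.12580 — 2 statements merged into one kernel-verified Lean document; each statement's English description precedes it below -/
import Mathlib

section
/- Let (Xₙ) be a martingale difference sequence with respect to a filtration (Fₙ) on a probability space (Ω, F, P), with |Xₙ| ≤ c almost surely for a constant c > 0. Then for all x, y > 0, P( ∃ n : Σ_{i=1}^n Xᵢ ≥ x and Σ_{i=1}^n E[Xᵢ² | F_{i−1}] ≤ y ) ≤ exp( −x² / (2(xc + y)) ). -/
open MeasureTheory

/-!
For `0 ≤ l` with `l c < 1`, the elementary bound `exp v ≤ 1 + v + v² / (2 (1 - l c))` for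
`|v| ≤ l c`, applied conditionally to `v = l Xₙ` with `E[Xₙ | ℱₙ₋₁] = 0`, gives
`E[exp (l Xₙ) | ℱₙ₋₁] ≤ exp (q E[Xₙ² | ℱₙ₋₁])` with `q = l² / (2 (1 - l c))`. Hence
`exp (l Sₙ - q Vₙ)`, with `Sₙ` the partial sums and `Vₙ` the sums of conditional variances, is a
nonnegative supermartingale starting at `1`. It is at least `exp (l x - q y)` on the event in
question, so Ville's maximal inequality bounds the probability by `exp (-(l x - q y))`, and the
choice `l = x / (x c + y)` makes `l x - q y = x² / (2 (x c + y))`.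
-/

open Nat in
theorem Real.exp_le_one_add_add_sq_div_of_abs_le {r v : ℝ} (hr : r < 1) (hvr : |v| ≤ r) :
    Real.exp v ≤ 1 + v + v ^ 2 / (2 * (1 - r)) := by
  have hr0 : 0 ≤ r := (abs_nonneg v).trans hvr
  have hsum : Summable fun n : ℕ => v ^ n / n ! := Real.summable_pow_div_factorial v
  have hterm (k : ℕ) : v ^ (k + 2) / (k + 2)! ≤ v ^ 2 / 2 * r ^ k :=
    calc v ^ (k + 2) / (k + 2)! ≤ |v| ^ (k + 2) / 2 := by
          rw [← abs_pow]
          gcongr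
          · exact le_abs_self _
          · exact_mod_cast (show 2 ≤ k + 2 by omega).trans (Nat.self_le_factorial _)
      _ = v ^ 2 / 2 * |v| ^ k := by rw [pow_add, sq_abs]; ring
      _ ≤ v ^ 2 / 2 * r ^ k := by gcongr
  have hexp : Real.exp v = ∑' n : ℕ, v ^ n / n ! := by
    rw [Real.exp_eq_exp_ℝ, NormedSpace.exp_eq_tsum_div]
  calc Real.exp v = 1 + v + ∑' k : ℕ, v ^ (k + 2) / (k + 2)! := by
        rw [hexp, ← hsum.sum_add_tsum_nat_add 2]
        simp [Finset.sum_range_succ]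
    _ ≤ 1 + v + ∑' k : ℕ, v ^ 2 / 2 * r ^ k :=
        add_le_add_right (((summable_nat_add_iff 2).2 hsum).tsum_le_tsum hterm
          ((summable_geometric_of_lt_one hr0 hr).mul_left _)) _
    _ = 1 + v + v ^ 2 / (2 * (1 - r)) := by
        rw [tsum_mul_left, tsum_geometric_of_lt_one hr0 hr]
        field_simp

namespace MeasureTheory

variable {Ω : Type*} {m : MeasurableSpace Ω} {μ : Measure Ω} {c : ℝ}

theorem integrable_exp_mul_of_ae_abs_le [IsFiniteMeasure μ] {Y : Ω → ℝ}
    (hY : AEStronglyMeasurable Y μ) (hYc : ∀ᵐ ω ∂μ, |Y ω| ≤ c) (l : ℝ) :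
    Integrable (fun ω => Real.exp (l * Y ω)) μ :=
  .of_bound (Real.continuous_exp.comp_aestronglyMeasurable (hY.const_mul l)) (Real.exp (|l| * c))
    (hYc.mono fun ω hω => by
      rw [Real.norm_eq_abs, abs_of_pos (Real.exp_pos _)]
      exact Real.exp_le_exp.2 ((le_abs_self _).trans
        (by rw [abs_mul]; exact mul_le_mul_of_nonneg_left hω (abs_nonneg l))))

theorem condExp_exp_mul_le_exp_mul_condExp_sq [IsFiniteMeasure μ] {m' : MeasurableSpace Ω}
    (hm : m' ≤ m) {Y : Ω → ℝ} (hY : AEStronglyMeasurable[m] Y μ) (hYc : ∀ᵐ ω ∂μ, |Y ω| ≤ c)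
    (hY0 : μ[Y | m'] =ᵐ[μ] 0) {l : ℝ} (hl : 0 ≤ l) (hlc : l * c < 1) :
    μ[fun ω => Real.exp (l * Y ω) | m'] ≤ᵐ[μ]
      fun ω => Real.exp (l ^ 2 / (2 * (1 - l * c)) * μ[fun ω => Y ω ^ 2 | m'] ω) := by
  set q := l ^ 2 / (2 * (1 - l * c))
  have hYint : Integrable Y μ :=
    .of_bound hY c (hYc.mono fun ω hω => by rwa [Real.norm_eq_abs])
  have hY2int : Integrable (fun ω => Y ω ^ 2) μ :=
    .of_bound (hY.pow 2) (c ^ 2) (hYc.mono fun ω hω => by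
      rw [Real.norm_eq_abs, abs_pow]
      exact pow_le_pow_left₀ (abs_nonneg _) hω 2)
  have hpointwise : (fun ω => Real.exp (l * Y ω)) ≤ᵐ[μ]
      (fun _ => (1 : ℝ)) + l • Y + q • fun ω => Y ω ^ 2 := by
    filter_upwards [hYc] with ω hω
    have hlY : |l * Y ω| ≤ l * c := by
      rw [abs_mul, abs_of_nonneg hl]
      exact mul_le_mul_of_nonneg_left hω hl
    calc Real.exp (l * Y ω) ≤ 1 + l * Y ω + (l * Y ω) ^ 2 / (2 * (1 - l * c)) :=
          Real.exp_le_one_add_add_sq_div_of_abs_le hlc hlY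
      _ = _ := by simp only [Pi.add_apply, Pi.smul_apply, smul_eq_mul, q]; ring
  have hlinear : μ[(fun _ => (1 : ℝ)) + l • Y + q • fun ω => Y ω ^ 2 | m'] =ᵐ[μ]
      fun ω => 1 + q * μ[fun ω => Y ω ^ 2 | m'] ω := by
    filter_upwards [condExp_add ((integrable_const 1).add (hYint.smul l)) (hY2int.smul q) m',
      condExp_add (integrable_const 1) (hYint.smul l) m', condExp_smul l Y m',
      condExp_smul q (fun ω => Y ω ^ 2) m', hY0] with ω h₁ h₂ h₃ h₄ h₅
    simp only [Pi.add_apply, Pi.smul_apply, smul_eq_mul, Pi.zero_apply] at h₁ h₂ h₃ h₄ h₅ ⊢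
    rw [h₁, h₂, h₃, h₄, h₅, condExp_const hm]
    ring
  filter_upwards [condExp_mono (integrable_exp_mul_of_ae_abs_le hY hYc l)
      (((integrable_const 1).add (hYint.smul l)).add (hY2int.smul q)) hpointwise,
    hlinear] with ω hmono hlin
  calc μ[fun ω => Real.exp (l * Y ω) | m'] ω ≤ 1 + q * μ[fun ω => Y ω ^ 2 | m'] ω :=
        hmono.trans hlin.le
    _ ≤ _ := by linarith [Real.add_one_le_exp (q * μ[fun ω => Y ω ^ 2 | m'] ω)]

variable {ℱ : Filtration ℕ m} {Z X : ℕ → Ω → ℝ}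

theorem Supermartingale.mul_measureReal_exists_le_le_integral [IsFiniteMeasure μ]
    (hZ : Supermartingale Z ℱ μ) (hnonneg : 0 ≤ Z) (ε : ℝ) (N : ℕ) :
    ε * μ.real {ω | ∃ n ≤ N, ε ≤ Z n ω} ≤ ∫ ω, Z 0 ω ∂μ := by
  set τ : Ω → ℕ∞ := fun ω => (hittingBtwn Z (Set.Ici ε) 0 N ω : ℕ)
  have hτ : IsStoppingTime ℱ τ :=
    hZ.stronglyAdapted.adapted.isStoppingTime_hittingBtwn measurableSet_Ici
  have hτN (ω : Ω) : τ ω ≤ N := WithTop.coe_le_coe.2 (hittingBtwn_le ω)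
  have hint : Integrable (stoppedValue Z τ) μ := integrable_stoppedValue ℕ hτ hZ.integrable hτN
  have hmeas : MeasurableSet {ω | ∃ n ≤ N, ε ≤ Z n ω} := by
    simp only [Set.ofPred_exists]
    exact .iUnion fun n => (MeasurableSet.const (n ≤ N)).inter
      (measurableSet_le measurable_const ((hZ.stronglyMeasurable n).mono (ℱ.le n)).measurable)
  have hhit (ω : Ω) (hω : ω ∈ {ω | ∃ n ≤ N, ε ≤ Z n ω}) : ε ≤ stoppedValue Z τ ω := by
    obtain ⟨n, hn, hεn⟩ := hω
    exact stoppedValue_hittingBtwn_mem ⟨n, ⟨n.zero_le, hn⟩, hεn⟩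
  have hstop : ∫ ω, stoppedValue Z τ ω ∂μ ≤ ∫ ω, Z 0 ω ∂μ := by
    have := hZ.neg.expected_stoppedValue_mono (isStoppingTime_const ℱ 0) hτ
      (fun _ => bot_le) hτN
    simpa [stoppedValue, integral_neg] using this
  calc ε * μ.real {ω | ∃ n ≤ N, ε ≤ Z n ω}
      ≤ ∫ ω in {ω | ∃ n ≤ N, ε ≤ Z n ω}, stoppedValue Z τ ω ∂μ :=
        setIntegral_ge_of_const_le_real hmeas (measure_ne_top _ _) hhit hint.integrableOn
    _ ≤ ∫ ω, stoppedValue Z τ ω ∂μ :=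
        setIntegral_le_integral hint (ae_of_all _ fun _ => hnonneg _ _)
    _ ≤ ∫ ω, Z 0 ω ∂μ := hstop

theorem Supermartingale.measure_exists_le_le [IsFiniteMeasure μ]
    (hZ : Supermartingale Z ℱ μ) (hnonneg : 0 ≤ Z) {ε : ℝ} (hε : 0 < ε) :
    μ {ω | ∃ n, ε ≤ Z n ω} ≤ ENNReal.ofReal ((∫ ω, Z 0 ω ∂μ) / ε) := by
  have hunion : {ω | ∃ n, ε ≤ Z n ω} = ⋃ N : ℕ, {ω | ∃ n ≤ N, ε ≤ Z n ω} := by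
    ext ω
    simp only [Set.mem_ofPred_eq, Set.mem_iUnion]
    exact ⟨fun ⟨n, hn⟩ => ⟨n, n, le_rfl, hn⟩, fun ⟨_, n, _, hn⟩ => ⟨n, hn⟩⟩
  have hmono : Monotone fun N : ℕ => {ω | ∃ n ≤ N, ε ≤ Z n ω} :=
    fun _ _ hNM _ ⟨n, hn, hεn⟩ => ⟨n, hn.trans hNM, hεn⟩
  rw [hunion, hmono.measure_iUnion]
  refine iSup_le fun N => ?_
  rw [← ofReal_measureReal]
  exact ENNReal.ofReal_le_ofReal <|
    (le_div_iff₀' hε).2 (hZ.mul_measureReal_exists_le_le_integral hnonneg ε N)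

noncomputable def partialSum (X : ℕ → Ω → ℝ) (n : ℕ) (ω : Ω) : ℝ := ∑ i ∈ Finset.Icc 1 n, X i ω

noncomputable def condVarSum (μ : Measure Ω) (ℱ : Filtration ℕ m) (X : ℕ → Ω → ℝ) (n : ℕ)
    (ω : Ω) : ℝ :=
  ∑ i ∈ Finset.Icc 1 n, μ[fun w => X i w ^ 2 | ℱ (i - 1)] ω

@[simp] theorem partialSum_zero : partialSum X 0 = 0 := by
  ext; simp [partialSum]

@[simp] theorem condVarSum_zero : condVarSum μ ℱ X 0 = 0 := by
  ext; simp [condVarSum]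

theorem partialSum_succ (n : ℕ) (ω : Ω) :
    partialSum X (n + 1) ω = partialSum X n ω + X (n + 1) ω :=
  Finset.sum_Icc_succ_top (by omega) _

theorem condVarSum_succ (n : ℕ) (ω : Ω) :
    condVarSum μ ℱ X (n + 1) ω = condVarSum μ ℱ X n ω + μ[fun w => X (n + 1) w ^ 2 | ℱ n] ω :=
  Finset.sum_Icc_succ_top (by omega) _

theorem measurable_partialSum (hadapted : ∀ n, 1 ≤ n → Measurable[ℱ n] (X n)) (n : ℕ) :
    Measurable[ℱ n] (partialSum X n) :=
  Finset.measurable_sum _ fun i hi =>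
    (hadapted i (Finset.mem_Icc.1 hi).1).mono (ℱ.mono (Finset.mem_Icc.1 hi).2) le_rfl

theorem measurable_condVarSum (n : ℕ) : Measurable[ℱ n] (condVarSum μ ℱ X n) :=
  Finset.measurable_sum _ fun i hi =>
    stronglyMeasurable_condExp.measurable.mono (ℱ.mono (by grind)) le_rfl

theorem ae_partialSum_le (hbdd : ∀ n, 1 ≤ n → ∀ᵐ ω ∂μ, |X n ω| ≤ c) (n : ℕ) :
    ∀ᵐ ω ∂μ, partialSum X n ω ≤ n * c := by
  filter_upwards [(Finset.Icc 1 n).eventually_all.2 fun i hi => hbdd i (Finset.mem_Icc.1 hi).1]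
    with ω hω
  calc partialSum X n ω ≤ (Finset.Icc 1 n).card • c :=
        Finset.sum_le_card_nsmul _ _ _ fun i hi => (le_abs_self _).trans (hω i hi)
    _ = n * c := by simp

theorem ae_condVarSum_nonneg (n : ℕ) : ∀ᵐ ω ∂μ, 0 ≤ condVarSum μ ℱ X n ω := by
  filter_upwards [(Finset.Icc 1 n).eventually_all.2 fun i _ =>
    condExp_nonneg (m := ℱ (i - 1)) (f := fun ω => X i ω ^ 2)
      (ae_of_all μ fun ω => sq_nonneg (X i ω))] with ω hω
  exact Finset.sum_nonneg hω

theorem supermartingale_exp_partialSum_sub_condVarSum [IsFiniteMeasure μ]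
    (hadapted : ∀ n, 1 ≤ n → Measurable[ℱ n] (X n))
    (hmds : ∀ n, 1 ≤ n → μ[X n | ℱ (n - 1)] =ᵐ[μ] 0)
    (hbdd : ∀ n, 1 ≤ n → ∀ᵐ ω ∂μ, |X n ω| ≤ c) {l : ℝ} (hl : 0 ≤ l) (hlc : l * c < 1) :
    Supermartingale (fun n ω => Real.exp (l * partialSum X n ω -
      l ^ 2 / (2 * (1 - l * c)) * condVarSum μ ℱ X n ω)) ℱ μ := by
  set q := l ^ 2 / (2 * (1 - l * c))
  have hq : 0 ≤ q := div_nonneg (sq_nonneg l) (by linarith)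
  have hmeas (n : ℕ) : Measurable[ℱ n]
      fun ω => Real.exp (l * partialSum X n ω - q * condVarSum μ ℱ X n ω) :=
    Real.measurable_exp.comp (((measurable_partialSum hadapted n).const_mul l).sub
      ((measurable_condVarSum n).const_mul q))
  have hint (n : ℕ) : Integrable
      (fun ω => Real.exp (l * partialSum X n ω - q * condVarSum μ ℱ X n ω)) μ := by
    refine .of_bound ((hmeas n).mono (ℱ.le n) le_rfl).aestronglyMeasurable
      (Real.exp (l * (n * c))) ?_
    filter_upwards [ae_partialSum_le hbdd n, ae_condVarSum_nonneg n] with ω hS hV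
    rw [Real.norm_eq_abs, abs_of_pos (Real.exp_pos _)]
    exact Real.exp_le_exp.2 (by nlinarith)
  refine supermartingale_nat (fun n => (hmeas n).stronglyMeasurable) hint fun n => ?_
  set g := μ[fun w => X (n + 1) w ^ 2 | ℱ n]
  set W := fun ω => Real.exp (l * partialSum X n ω - q * condVarSum μ ℱ X n ω - q * g ω)
  have hsplit : (fun ω => Real.exp (l * partialSum X (n + 1) ω - q * condVarSum μ ℱ X (n + 1) ω))
      = W * fun ω => Real.exp (l * X (n + 1) ω) := by
    ext ω
    rw [Pi.mul_apply, partialSum_succ, condVarSum_succ, ← Real.exp_add]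
    congr 1
    ring
  have hW : StronglyMeasurable[ℱ n] W :=
    (Real.measurable_exp.comp ((((measurable_partialSum hadapted n).const_mul l).sub
      ((measurable_condVarSum n).const_mul q)).sub
        (stronglyMeasurable_condExp.measurable.const_mul q))).stronglyMeasurable
  have hX : AEStronglyMeasurable[m] (X (n + 1)) μ :=
    ((hadapted (n + 1) (by omega)).mono (ℱ.le _) le_rfl).aestronglyMeasurable
  show μ[fun ω => Real.exp (l * partialSum X (n + 1) ω - q * condVarSum μ ℱ X (n + 1) ω) | ℱ n]
    ≤ᵐ[μ] fun ω => Real.exp (l * partialSum X n ω - q * condVarSum μ ℱ X n ω)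
  rw [hsplit]
  filter_upwards [condExp_mul_of_stronglyMeasurable_left hW (hsplit ▸ hint (n + 1))
      (integrable_exp_mul_of_ae_abs_le hX (hbdd (n + 1) (by omega)) l),
    condExp_exp_mul_le_exp_mul_condExp_sq (ℱ.le n) hX (hbdd (n + 1) (by omega))
      (hmds (n + 1) (by omega)) hl hlc] with ω hmul hle
  calc μ[W * fun ω => Real.exp (l * X (n + 1) ω) | ℱ n] ω
      = W ω * μ[fun ω => Real.exp (l * X (n + 1) ω) | ℱ n] ω := hmul
    _ ≤ W ω * Real.exp (q * g ω) := mul_le_mul_of_nonneg_left hle (Real.exp_pos _).le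
    _ = _ := by rw [← Real.exp_add]; congr 1; ring

end MeasureTheory

/-- Peña's exponential inequality for martingale difference sequences bounded by a constant:
`P(∃ n, Σ_{i=1}^n Xᵢ ≥ x and Σ_{i=1}^n E[Xᵢ²|F_{i-1}] ≤ y) ≤ exp(−x²/(2(xc+y)))`. -/
theorem stmt2 {Ω : Type*} {m : MeasurableSpace Ω} {μ : Measure Ω} [IsProbabilityMeasure μ]
    (ℱ : Filtration ℕ m) (X : ℕ → Ω → ℝ) (c : ℝ) (hc : 0 < c)
    (hadapted : ∀ n, 1 ≤ n → Measurable[ℱ n] (X n))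
    (hmds : ∀ n, 1 ≤ n → μ[X n | ℱ (n - 1)] =ᵐ[μ] 0)
    (hbdd : ∀ n, 1 ≤ n → ∀ᵐ ω ∂μ, |X n ω| ≤ c)
    (x y : ℝ) (hx : 0 < x) (hy : 0 < y) :
    μ {ω | ∃ n, 1 ≤ n ∧ x ≤ ∑ i ∈ Finset.Icc 1 n, X i ω ∧
        ∑ i ∈ Finset.Icc 1 n, (μ[fun w => (X i w) ^ 2 | ℱ (i - 1)]) ω ≤ y}
      ≤ ENNReal.ofReal (Real.exp (-(x ^ 2) / (2 * (x * c + y)))) := by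
  have hxcy : 0 < x * c + y := by positivity
  set l := x / (x * c + y)
  set q := l ^ 2 / (2 * (1 - l * c))
  have hl : 0 ≤ l := by positivity
  have hlc : l * c < 1 := by
    rw [div_mul_eq_mul_div, div_lt_one hxcy]
    linarith
  have hq : 0 ≤ q := div_nonneg (sq_nonneg l) (by linarith)
  have hexponent : l * x - q * y = x ^ 2 / (2 * (x * c + y)) := by
    have h1 : 1 - l * c = y / (x * c + y) := by simp only [l]; field_simp; ring
    simp only [q, h1, l]
    field_simp
    ring
  have hZ := supermartingale_exp_partialSum_sub_condVarSum hadapted hmds hbdd hl hlc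
  calc _ ≤ μ {ω | ∃ n, Real.exp (l * x - q * y) ≤
          Real.exp (l * partialSum X n ω - q * condVarSum μ ℱ X n ω)} :=
        measure_mono <| by
          rintro ω ⟨n, -, hS, hV⟩
          exact ⟨n, Real.exp_le_exp.2 <|
            sub_le_sub (mul_le_mul_of_nonneg_left hS hl) (mul_le_mul_of_nonneg_left hV hq)⟩
    _ ≤ _ := hZ.measure_exists_le_le (fun _ _ => (Real.exp_pos _).le) (Real.exp_pos _)
    _ = _ := by simp [hexponent, ← Real.exp_neg, neg_div]
end

section
/- Let X be a nonnegative random variable on a probability space (Ω, F, P). For any δ > 0, the series Σ_{n≥1} P( X ≥ δ √(n log log n) ) converges if and only if E[ X² / log log X ] < ∞, where log log x is interpreted as log(log(max(e^e, x))) so it is bounded below by 1. -/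
open MeasureTheory

/-- Truncated iterated logarithm: `log log x := ln(max(e, ln(max(e, x))))`, bounded below by 1. -/
noncomputable def LL (x : ℝ) : ℝ :=
  Real.log (max (Real.exp 1) (Real.log (max (Real.exp 1) x)))



lemma one_le_LL (x : ℝ) : 1 ≤ LL x := by
  unfold LL
  calc (1:ℝ) = Real.log (Real.exp 1) := (Real.log_exp 1).symm
    _ ≤ _ := Real.log_le_log (Real.exp_pos 1) (le_max_left _ _)

lemma LL_pos (x : ℝ) : 0 < LL x := lt_of_lt_of_le one_pos (one_le_LL x)

-- key: LL x = log (M2 x) with M2 x := max e (log (max e x)), and e ≤ M2 x.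

lemma LL_mul_le (c x : ℝ) (hc : 0 < c) (hx : 0 ≤ x) :
    LL (c * x) ≤ LL x + |Real.log c| := by
  set a := |Real.log c| with ha
  have ha0 : 0 ≤ a := abs_nonneg _
  rcases eq_or_lt_of_le hx with h0 | hxpos
  · rw [← h0, mul_zero]; linarith [le_refl (LL 0)]
  have e_pos : (0:ℝ) < Real.exp 1 := Real.exp_pos 1
  set M1 : ℝ := max (Real.exp 1) x with hM1
  set M2 : ℝ := max (Real.exp 1) (Real.log M1) with hM2
  have hM1e : Real.exp 1 ≤ M1 := le_max_left _ _
  have hM2e : Real.exp 1 ≤ M2 := le_max_left _ _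
  have hM2one : 1 ≤ M2 := le_trans (by nlinarith [Real.add_one_le_exp 1]) hM2e
  -- step 1 : log (max e (c*x)) ≤ log M1 + a
  have step1 : Real.log (max (Real.exp 1) (c * x)) ≤ Real.log M1 + a := by
    rcases le_or_gt (c * x) (Real.exp 1) with h | h
    · rw [max_eq_left h]
      have : (1:ℝ) ≤ Real.log M1 := by
        calc (1:ℝ) = Real.log (Real.exp 1) := (Real.log_exp 1).symm
          _ ≤ _ := Real.log_le_log e_pos hM1e
      rw [Real.log_exp]; linarith
    · rw [max_eq_right h.le, Real.log_mul (ne_of_gt hc) (ne_of_gt hxpos)]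
      have h1 : Real.log c ≤ a := le_abs_self _
      have h2 : Real.log x ≤ Real.log M1 := Real.log_le_log hxpos (le_max_right _ _)
      linarith
  -- step 2 : max e (log (max e (c*x))) ≤ M2 + a
  have step2 : max (Real.exp 1) (Real.log (max (Real.exp 1) (c * x))) ≤ M2 + a := by
    apply max_le (by linarith)
    exact le_trans step1 (by have := le_max_right (Real.exp 1) (Real.log M1); linarith)
  -- step 3 : log (M2 + a) ≤ LL x + a
  have hLLx : LL x = Real.log M2 := rfl
  have step3 : Real.log (M2 + a) ≤ Real.log M2 + a := by
    have h1 : M2 + a ≤ (1 + a) * M2 := by nlinarith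
    calc Real.log (M2 + a) ≤ Real.log ((1 + a) * M2) :=
          Real.log_le_log (by linarith) h1
      _ = Real.log (1 + a) + Real.log M2 := Real.log_mul (by linarith) (by linarith)
      _ ≤ a + Real.log M2 := by
          have := Real.log_le_sub_one_of_pos (show (0:ℝ) < 1 + a by linarith)
          linarith
      _ = Real.log M2 + a := by ring
  calc LL (c * x) ≤ Real.log (M2 + a) :=
        Real.log_le_log (lt_of_lt_of_le e_pos (le_max_left _ _)) step2
    _ ≤ LL x + a := by rw [hLLx]; exact step3

lemma LL_sq_le (x : ℝ) (hx : 0 ≤ x) : LL (x ^ 2) ≤ 2 * LL x := by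
  have e_pos : (0:ℝ) < Real.exp 1 := Real.exp_pos 1
  have h1LL := one_le_LL x
  rcases le_or_gt (x ^ 2) (Real.exp 1) with h | h
  · have : LL (x ^ 2) = 1 := by
      unfold LL
      rw [max_eq_left h, Real.log_exp, max_eq_left (by nlinarith [Real.add_one_le_exp 1]),
        Real.log_exp]
    rw [this]; linarith
  · have hx1 : 1 < x := by nlinarith [Real.add_one_le_exp 1]
    set M1 : ℝ := max (Real.exp 1) x with hM1
    set M2 : ℝ := max (Real.exp 1) (Real.log M1) with hM2
    have hM2e : Real.exp 1 ≤ M2 := le_max_left _ _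
    have hM2pos : 0 < M2 := lt_of_lt_of_le e_pos hM2e
    have hlogx : Real.log x ≤ Real.log M1 :=
      Real.log_le_log (by linarith) (le_max_right _ _)
    have hlogM1 : Real.log M1 ≤ M2 := le_max_right _ _
    have key : max (Real.exp 1) (Real.log (max (Real.exp 1) (x ^ 2))) ≤ 2 * M2 := by
      apply max_le (by linarith)
      rw [max_eq_right h.le, Real.log_pow]
      push_cast
      linarith
    have hLLx : LL x = Real.log M2 := rfl
    calc LL (x ^ 2) ≤ Real.log (2 * M2) :=
          Real.log_le_log (lt_of_lt_of_le e_pos (le_max_left _ _)) key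
      _ = Real.log 2 + Real.log M2 := Real.log_mul two_ne_zero (ne_of_gt hM2pos)
      _ ≤ 1 + Real.log M2 := by
          have h2e : (2:ℝ) ≤ Real.exp 1 := by nlinarith [Real.add_one_le_exp 1]
          have := Real.log_le_log two_pos h2e
          rw [Real.log_exp] at this; linarith
      _ ≤ 2 * LL x := by rw [hLLx]; have : 1 ≤ Real.log M2 := h1LL; linarith

lemma LL_mono : Monotone LL := by
  intro a b h
  unfold LL
  apply Real.log_le_log (lt_of_lt_of_le (Real.exp_pos 1) (le_max_left _ _))
  apply max_le_max le_rfl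
  apply Real.log_le_log (lt_of_lt_of_le (Real.exp_pos 1) (le_max_left _ _))
  exact max_le_max le_rfl h


lemma LL_le_max (x : ℝ) : LL x ≤ max (Real.exp 1) x := by
  unfold LL
  have h1 : Real.log (max (Real.exp 1) x) ≤ max (Real.exp 1) x :=
    Real.log_le_self (le_trans (Real.exp_pos 1).le (le_max_left _ _))
  have h2 : max (Real.exp 1) (Real.log (max (Real.exp 1) x)) ≤ max (Real.exp 1) x :=
    max_le (le_max_left _ _) (le_trans h1 le_rfl)
  calc Real.log _ ≤ max (Real.exp 1) (Real.log (max (Real.exp 1) x)) :=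
        Real.log_le_self (le_trans (Real.exp_pos 1).le (le_max_left _ _))
    _ ≤ _ := h2



lemma tsum_ite_le (P : ℕ → Prop) [DecidablePred P] (B : ℝ) (hB : 0 ≤ B)
    (h : ∀ n, P n → (n : ℝ) + 1 ≤ B) :
    (∑' n, if P n then (1 : ENNReal) else 0) ≤ ENNReal.ofReal (B + 1) := by
  have h0 : ∀ n ∉ Finset.range ⌈B⌉₊, (if P n then (1 : ENNReal) else 0) = 0 := by
    intro n hn
    rw [Finset.mem_range, not_lt] at hn
    rw [if_neg]
    intro hP
    have h1 : B ≤ (⌈B⌉₊ : ℝ) := Nat.le_ceil B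
    have h2 : ((⌈B⌉₊ : ℕ) : ℝ) ≤ (n : ℝ) := by exact_mod_cast hn
    have := h n hP
    linarith
  rw [tsum_eq_sum h0]
  calc (∑ n ∈ Finset.range ⌈B⌉₊, if P n then (1 : ENNReal) else 0)
      ≤ ∑ _n ∈ Finset.range ⌈B⌉₊, (1 : ENNReal) :=
        Finset.sum_le_sum (fun n _ => by split <;> simp)
    _ = (⌈B⌉₊ : ENNReal) := by simp
    _ ≤ ENNReal.ofReal (B + 1) := by
        rw [← ENNReal.ofReal_natCast]
        exact ENNReal.ofReal_le_ofReal (le_of_lt (Nat.ceil_lt_add_one hB))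

lemma le_tsum_ite (P : ℕ → Prop) [DecidablePred P] (A : ℝ)
    (h : ∀ n : ℕ, (n : ℝ) + 1 ≤ A → P n) :
    ENNReal.ofReal A ≤ (∑' n, if P n then (1 : ENNReal) else 0) + 1 := by
  rcases le_or_gt A 0 with hA | hA
  · simp [ENNReal.ofReal_eq_zero.2 hA]
  have hsum : ((⌊A⌋₊ : ENNReal)) ≤ ∑' n, if P n then (1 : ENNReal) else 0 := by
    have : ∀ n ∈ Finset.range ⌊A⌋₊, (if P n then (1 : ENNReal) else 0) = 1 := by
      intro n hn
      rw [Finset.mem_range] at hn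
      rw [if_pos]
      apply h
      have h1 : (n : ℝ) + 1 ≤ (⌊A⌋₊ : ℝ) := by exact_mod_cast Nat.succ_le_of_lt hn
      have h2 : ((⌊A⌋₊ : ℕ) : ℝ) ≤ A := Nat.floor_le hA.le
      linarith
    calc ((⌊A⌋₊ : ENNReal)) = ∑ n ∈ Finset.range ⌊A⌋₊, (if P n then (1 : ENNReal) else 0) := by
          rw [Finset.sum_congr rfl this]; simp
      _ ≤ _ := ENNReal.sum_le_tsum _
  calc ENNReal.ofReal A ≤ ENNReal.ofReal ((⌊A⌋₊ : ℝ) + 1) :=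
        ENNReal.ofReal_le_ofReal (Nat.lt_floor_add_one A).le
    _ = (⌊A⌋₊ : ENNReal) + 1 := by
        rw [ENNReal.ofReal_add (by positivity) zero_le_one, ENNReal.ofReal_natCast,
          ENNReal.ofReal_one]
    _ ≤ _ := add_le_add_left hsum 1



-- x ≤ x²/LL x + e
lemma x_le_ratio (x : ℝ) (hx : 0 ≤ x) : x ≤ x ^ 2 / LL x + Real.exp 1 := by
  have he : (0:ℝ) < Real.exp 1 := Real.exp_pos 1
  have h1 : LL x ≤ Real.exp 1 + x := le_trans (LL_le_max x) (by
    rcases max_cases (Real.exp 1) x with ⟨h, _⟩ | ⟨h, _⟩ <;> rw [h] <;> linarith)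
  have h2 : x - Real.exp 1 ≤ x ^ 2 / (Real.exp 1 + x) := by
    rw [le_div_iff₀ (by linarith)]
    nlinarith
  have h3 : x ^ 2 / (Real.exp 1 + x) ≤ x ^ 2 / LL x := by
    gcongr
    exact LL_pos x
  linarith

-- LL (x²/δ²) ≤ (2 + 2|log δ|) * LL x
lemma LL_y_le (δ x : ℝ) (hδ : 0 < δ) (hx : 0 ≤ x) :
    LL (x ^ 2 / δ ^ 2) ≤ (2 + 2 * |Real.log δ|) * LL x := by
  have ha : (0:ℝ) ≤ |Real.log δ| := abs_nonneg _
  have h1 : x ^ 2 / δ ^ 2 = (δ ^ 2)⁻¹ * x ^ 2 := by ring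
  have h2 := LL_mul_le ((δ ^ 2)⁻¹) (x ^ 2) (by positivity) (sq_nonneg x)
  have h3 : |Real.log ((δ ^ 2)⁻¹)| = 2 * |Real.log δ| := by
    rw [Real.log_inv, abs_neg, Real.log_pow]
    push_cast
    rw [abs_mul, abs_two]
  have h4 := LL_sq_le x hx
  have h5 := one_le_LL x
  rw [h1]
  rw [h3] at h2
  nlinarith

-- LL x ≤ (1 + |log δ|) * LL (x/δ)
lemma LL_x_le (δ x : ℝ) (hδ : 0 < δ) (hx : 0 ≤ x) :
    LL x ≤ (1 + |Real.log δ|) * LL (x / δ) := by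
  have ha : (0:ℝ) ≤ |Real.log δ| := abs_nonneg _
  have h1 : δ * (x / δ) = x := by field_simp
  have h2 := LL_mul_le δ (x / δ) hδ (div_nonneg hx hδ.le)
  rw [h1] at h2
  have h3 := one_le_LL (x / δ)
  nlinarith

lemma real_lower (δ x : ℝ) (hδ : 0 < δ) (hx : 0 ≤ x) :
    x ^ 2 / LL x ≤ (δ ^ 2 * (2 + 2 * |Real.log δ|)) * ((x ^ 2 / δ ^ 2) / LL (x ^ 2 / δ ^ 2)) := by
  set y := x ^ 2 / δ ^ 2 with hy
  have hy0 : 0 ≤ y := by positivity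
  have hLLy := LL_pos y
  have hLLx := LL_pos x
  have hk := LL_y_le δ x hδ hx
  rw [mul_div_assoc'] at *
  rw [div_le_div_iff₀ hLLx hLLy]
  have hx2 : x ^ 2 = δ ^ 2 * y := by rw [hy]; field_simp [hδ.ne']
  nlinarith [sq_nonneg δ, mul_le_mul_of_nonneg_left hk hy0]

lemma count_lower (y t : ℝ) (hy : 0 ≤ y) (ht : 0 ≤ t) (h : t ≤ y / LL y) :
    t * LL t ≤ y := by
  have hLLy := LL_pos y
  have h1 : y / LL y ≤ y := div_le_self hy (one_le_LL y)
  have h2 : LL t ≤ LL y := LL_mono (le_trans h h1)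
  calc t * LL t ≤ (y / LL y) * LL y := by
        apply mul_le_mul h h2 (LL_pos t).le (by positivity)
    _ = y := div_mul_cancel₀ y (ne_of_gt hLLy)

lemma count_upper (δ x t : ℝ) (hδ : 0 < δ) (hx : 0 ≤ x) (ht : 1 ≤ t)
    (h : t * LL t ≤ x ^ 2 / δ ^ 2) :
    t ≤ x / δ + (x ^ 2 / δ ^ 2) / LL (x / δ) := by
  have hLLt := LL_pos t
  have hLLd := LL_pos (x / δ)
  have hy0 : (0:ℝ) ≤ x ^ 2 / δ ^ 2 := by positivity
  rcases le_or_gt t (x / δ) with hc | hc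
  · have : (0:ℝ) ≤ (x ^ 2 / δ ^ 2) / LL (x / δ) := by positivity
    linarith
  · have h2 : LL (x / δ) ≤ LL t := LL_mono hc.le
    have h3 : t ≤ (x ^ 2 / δ ^ 2) / LL t := by
      rw [le_div_iff₀ hLLt]; linarith
    have h4 : (x ^ 2 / δ ^ 2) / LL t ≤ (x ^ 2 / δ ^ 2) / LL (x / δ) := by
      gcongr
    have : (0:ℝ) ≤ x / δ := by positivity
    linarith

lemma real_upper (δ x : ℝ) (hδ : 0 < δ) (hx : 0 ≤ x) :
    x / δ + (x ^ 2 / δ ^ 2) / LL (x / δ) + 1 ≤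
      (1 / δ + (1 + |Real.log δ|) / δ ^ 2) * (x ^ 2 / LL x) + (Real.exp 1 / δ + 1) := by
  have ha : (0:ℝ) ≤ |Real.log δ| := abs_nonneg _
  have hLLx := LL_pos x
  have hLLd := LL_pos (x / δ)
  have hu0 : (0:ℝ) ≤ x ^ 2 / LL x := by positivity
  have h1 : x / δ ≤ (x ^ 2 / LL x + Real.exp 1) / δ := by
    gcongr
    exact x_le_ratio x hx
  have h2 : (x ^ 2 / δ ^ 2) / LL (x / δ) ≤ ((1 + |Real.log δ|) / δ ^ 2) * (x ^ 2 / LL x) := by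
    have hk := LL_x_le δ x hδ hx
    rw [div_div]
    rw [div_mul_div_comm]
    rw [div_le_div_iff₀ (by positivity) (by positivity)]
    nlinarith [sq_nonneg x, sq_nonneg δ, mul_le_mul_of_nonneg_left hk (sq_nonneg x)]
  have h3 : (x ^ 2 / LL x + Real.exp 1) / δ = (1/δ) * (x ^ 2 / LL x) + Real.exp 1 / δ := by
    ring
  rw [h3] at h1
  nlinarith [h1, h2]


lemma sqrt_cond (δ x t : ℝ) (hδ : 0 < δ) (hx : 0 ≤ x) (ht : 0 ≤ t) :
    δ * Real.sqrt t ≤ x ↔ t ≤ x ^ 2 / δ ^ 2 := by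
  rw [mul_comm, ← le_div_iff₀ hδ]
  constructor
  · intro h
    have h2 := pow_le_pow_left₀ (Real.sqrt_nonneg t) h 2
    rwa [Real.sq_sqrt ht, div_pow] at h2
  · intro h
    have h' : t ≤ (x / δ) ^ 2 := by rw [div_pow]; exact h
    have h2 := Real.sqrt_le_sqrt h'
    rwa [Real.sqrt_sq (by positivity)] at h2

lemma measurable_LL : Measurable LL :=
  Real.measurable_log.comp
    (measurable_const.max (Real.measurable_log.comp (measurable_const.max measurable_id)))

/-- For a nonnegative random variable `X` and any `δ > 0`, the series
`Σₙ P(X ≥ δ√(n log log n))` converges iff `E[X²/log log X] < ∞`. -/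
theorem stmt3 {Ω : Type*} [MeasurableSpace Ω] (μ : Measure Ω) [IsProbabilityMeasure μ]
    (X : Ω → ℝ) (hX : Measurable X) (hpos : ∀ ω, 0 ≤ X ω)
    (δ : ℝ) (hδ : 0 < δ) :
    (∑' n : ℕ, μ {ω | δ * Real.sqrt (((n : ℝ) + 1) * LL ((n : ℝ) + 1)) ≤ X ω}) ≠ ⊤ ↔
      Integrable (fun ω => (X ω) ^ 2 / LL (X ω)) μ := by
  classical
  set u : Ω → ℝ := fun ω => (X ω) ^ 2 / LL (X ω) with hu
  have hmu : Measurable u := (hX.pow_const 2).div (measurable_LL.comp hX)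
  have hu0 : ∀ ω, 0 ≤ u ω := fun ω => div_nonneg (sq_nonneg _) (LL_pos _).le
  set I := ∫⁻ ω, ENNReal.ofReal (u ω) ∂μ with hI
  -- Integrability is equivalent to finiteness of I
  have hInt : Integrable u μ ↔ I < ⊤ := by
    rw [← hasFiniteIntegral_iff_ofReal (Filter.Eventually.of_forall hu0)]
    exact ⟨fun h => h.2, fun h => ⟨hmu.aestronglyMeasurable, h⟩⟩
  -- the counting function
  set S : Ω → ENNReal := fun ω =>
    ∑' n : ℕ, if ((n : ℝ) + 1) * LL ((n : ℝ) + 1) ≤ (X ω) ^ 2 / δ ^ 2 then (1 : ENNReal) else 0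
    with hS
  have ht0 : ∀ n : ℕ, (1 : ℝ) ≤ (n : ℝ) + 1 := fun n => by
    have : (0:ℝ) ≤ (n : ℝ) := Nat.cast_nonneg n
    linarith
  -- rewrite the series as a lintegral
  have hPmeas : ∀ n : ℕ,
      MeasurableSet {ω | ((n : ℝ) + 1) * LL ((n : ℝ) + 1) ≤ (X ω) ^ 2 / δ ^ 2} :=
    fun n => measurableSet_le measurable_const ((hX.pow_const 2).div_const _)
  have key : (∑' n : ℕ, μ {ω | δ * Real.sqrt (((n : ℝ) + 1) * LL ((n : ℝ) + 1)) ≤ X ω})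
      = ∫⁻ ω, S ω ∂μ := by
    have hset : ∀ n : ℕ, {ω | δ * Real.sqrt (((n : ℝ) + 1) * LL ((n : ℝ) + 1)) ≤ X ω}
        = {ω | ((n : ℝ) + 1) * LL ((n : ℝ) + 1) ≤ (X ω) ^ 2 / δ ^ 2} := by
      intro n
      ext ω
      simp only [Set.mem_setOf_eq]
      exact sqrt_cond δ (X ω) _ hδ (hpos ω)
        (mul_nonneg (by linarith [ht0 n]) (LL_pos _).le)
    calc (∑' n : ℕ, μ {ω | δ * Real.sqrt (((n : ℝ) + 1) * LL ((n : ℝ) + 1)) ≤ X ω})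
        = ∑' n : ℕ, ∫⁻ ω, (if ((n : ℝ) + 1) * LL ((n : ℝ) + 1) ≤ (X ω) ^ 2 / δ ^ 2
            then (1 : ENNReal) else 0) ∂μ := by
          congr 1
          funext n
          rw [hset n, ← lintegral_indicator_one (hPmeas n)]
          congr 1
      _ = ∫⁻ ω, S ω ∂μ := by
          rw [← lintegral_tsum]
          intro n
          exact (Measurable.ite (hPmeas n) measurable_const measurable_const).aemeasurable
  -- pointwise bounds
  have hlow : ∀ ω, ENNReal.ofReal (u ω)
      ≤ ENNReal.ofReal (δ ^ 2 * (2 + 2 * |Real.log δ|)) * (S ω + 1) := by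
    intro ω
    have h0 : ENNReal.ofReal (((X ω) ^ 2 / δ ^ 2) / LL ((X ω) ^ 2 / δ ^ 2)) ≤ S ω + 1 := by
      apply le_tsum_ite
      intro n hn
      exact count_lower _ _ (by positivity) (by linarith [ht0 n]) hn
    calc ENNReal.ofReal (u ω)
        ≤ ENNReal.ofReal ((δ ^ 2 * (2 + 2 * |Real.log δ|))
            * (((X ω) ^ 2 / δ ^ 2) / LL ((X ω) ^ 2 / δ ^ 2))) :=
          ENNReal.ofReal_le_ofReal (real_lower δ (X ω) hδ (hpos ω))
      _ = ENNReal.ofReal (δ ^ 2 * (2 + 2 * |Real.log δ|))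
            * ENNReal.ofReal (((X ω) ^ 2 / δ ^ 2) / LL ((X ω) ^ 2 / δ ^ 2)) :=
          ENNReal.ofReal_mul (by positivity)
      _ ≤ _ := mul_le_mul_right h0 _
  have hup : ∀ ω, S ω ≤ ENNReal.ofReal (1 / δ + (1 + |Real.log δ|) / δ ^ 2)
      * ENNReal.ofReal (u ω) + ENNReal.ofReal (Real.exp 1 / δ + 1) := by
    intro ω
    have hB0 : (0:ℝ) ≤ X ω / δ + ((X ω) ^ 2 / δ ^ 2) / LL (X ω / δ) := by
      have := LL_pos (X ω / δ)
      have := hpos ω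
      positivity
    have h1 : S ω ≤ ENNReal.ofReal ((X ω / δ + ((X ω) ^ 2 / δ ^ 2) / LL (X ω / δ)) + 1) := by
      apply tsum_ite_le _ _ hB0
      intro n hn
      exact count_upper δ (X ω) _ hδ (hpos ω) (ht0 n) hn
    refine le_trans h1 ?_
    calc ENNReal.ofReal ((X ω / δ + ((X ω) ^ 2 / δ ^ 2) / LL (X ω / δ)) + 1)
        ≤ ENNReal.ofReal ((1 / δ + (1 + |Real.log δ|) / δ ^ 2) * u ω + (Real.exp 1 / δ + 1)) :=
          ENNReal.ofReal_le_ofReal (real_upper δ (X ω) hδ (hpos ω))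
      _ ≤ _ := by
          rw [ENNReal.ofReal_add (mul_nonneg (by positivity) (hu0 ω)) (by positivity),
            ENNReal.ofReal_mul (by positivity)]
  -- conclude
  rw [key, hInt]
  constructor
  · intro hJ
    have hb : I ≤ ENNReal.ofReal (δ ^ 2 * (2 + 2 * |Real.log δ|)) * ((∫⁻ ω, S ω ∂μ) + 1) := by
      calc I ≤ ∫⁻ ω, ENNReal.ofReal (δ ^ 2 * (2 + 2 * |Real.log δ|)) * (S ω + 1) ∂μ :=
            lintegral_mono hlow
        _ = ENNReal.ofReal (δ ^ 2 * (2 + 2 * |Real.log δ|)) * ((∫⁻ ω, S ω ∂μ) + 1) := by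
            rw [lintegral_const_mul' _ _ ENNReal.ofReal_ne_top,
              lintegral_add_right _ measurable_const, lintegral_const, measure_univ, mul_one]
    refine lt_of_le_of_lt hb ?_
    exact ENNReal.mul_lt_top ENNReal.ofReal_lt_top
      (by rw [ENNReal.add_lt_top]; exact ⟨lt_top_iff_ne_top.2 hJ, ENNReal.one_lt_top⟩)
  · intro hIlt
    have hb : (∫⁻ ω, S ω ∂μ) ≤ ENNReal.ofReal (1 / δ + (1 + |Real.log δ|) / δ ^ 2) * I
        + ENNReal.ofReal (Real.exp 1 / δ + 1) := by
      calc (∫⁻ ω, S ω ∂μ)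
          ≤ ∫⁻ ω, (ENNReal.ofReal (1 / δ + (1 + |Real.log δ|) / δ ^ 2)
              * ENNReal.ofReal (u ω) + ENNReal.ofReal (Real.exp 1 / δ + 1)) ∂μ :=
            lintegral_mono hup
        _ = _ := by
            rw [lintegral_add_right _ measurable_const,
              lintegral_const_mul' _ _ ENNReal.ofReal_ne_top, lintegral_const,
              measure_univ, mul_one]
    refine ne_top_of_le_ne_top ?_ hb
    exact ENNReal.add_ne_top.2
      ⟨ENNReal.mul_ne_top ENNReal.ofReal_ne_top hIlt.ne, ENNReal.ofReal_ne_top⟩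
end
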